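/- Δ maps the ideal I^{l−1} onto the submodule x^{l−1}·B; that is, Δ(I^{l−1}) = x^{l−1}·B, so Δ restricts to an isomorphism of A-modules from I^{l−1} to x^{l−1}·B. -/

import Mathlib

open MvPolynomial

set_option maxHeartbeats 800000
set_option synthInstance.maxHeartbeats 200000

noncomputable section

/-- `A = ℤ[x,y]/(x^l − y^l)`, with `x = X 0`, `y = X 1`. -/
def IA (l : ℕ) : Ideal (MvPolynomial (Fin 2) ℤ) := Ideal.span {X 0 ^ l - X 1 ^ l}

/-- `B = ℤ[x,t]/(t^l − 1)`, with `x = X 0`, `t = X 1`. -/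
def IB (l : ℕ) : Ideal (MvPolynomial (Fin 2) ℤ) := Ideal.span {X 1 ^ l - 1}

abbrev Aq (l : ℕ) := MvPolynomial (Fin 2) ℤ ⧸ IA l
abbrev Bq (l : ℕ) := MvPolynomial (Fin 2) ℤ ⧸ IB l

/-- The class of `x` in `A`. -/
def xA (l : ℕ) : Aq l := Ideal.Quotient.mk (IA l) (X 0)
/-- The class of `y` in `A`. -/
def yA (l : ℕ) : Aq l := Ideal.Quotient.mk (IA l) (X 1)
/-- The class of `x` in `B`. -/
def xB (l : ℕ) : Bq l := Ideal.Quotient.mk (IB l) (X 0)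
/-- The class of `t` in `B`. -/
def tB (l : ℕ) : Bq l := Ideal.Quotient.mk (IB l) (X 1)

lemma tB_pow (l : ℕ) : tB l ^ l = 1 := by
  have h : (X 1 ^ l - 1 : MvPolynomial (Fin 2) ℤ) ∈ IB l := Ideal.subset_span rfl
  have h2 : Ideal.Quotient.mk (IB l) (X 1 ^ l - 1) = 0 :=
    Ideal.Quotient.eq_zero_iff_mem.mpr h
  have h3 : tB l ^ l - 1 = 0 := by
    rw [tB, ← map_pow, ← map_one (Ideal.Quotient.mk (IB l)), ← map_sub]
    simpa using h2
  exact sub_eq_zero.mp h3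

/-- The diagonal ring homomorphism `Δ : A → B`, determined by `x ↦ x`, `y ↦ t·x`. -/
def Δmap (l : ℕ) : Aq l →+* Bq l :=
  Ideal.Quotient.lift (IA l) ((aeval ![xB l, tB l * xB l]).toRingHom)
    (by
      intro p hp
      obtain ⟨c, rfl⟩ := Ideal.mem_span_singleton'.mp hp
      have key : (aeval ![xB l, tB l * xB l]) (X 0 ^ l - X 1 ^ l : MvPolynomial (Fin 2) ℤ) = 0 := by
        simp [mul_pow, tB_pow l]
      simp only [AlgHom.toRingHom_eq_coe, RingHom.coe_coe, map_mul, key, mul_zero])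

lemma Δmap_xA (l : ℕ) : Δmap l (xA l) = xB l := by
  simp [Δmap, xA]

lemma Δmap_yA (l : ℕ) : Δmap l (yA l) = tB l * xB l := by
  simp [Δmap, yA]

/-- The ideal `I = (x, y) ⊆ A`. -/
def Iid (l : ℕ) : Ideal (Aq l) := Ideal.span {xA l, yA l}

/-- `B` is an `A`-algebra (hence an `A`-module) via `Δ`. -/
instance instAlgAB (l : ℕ) : Algebra (Aq l) (Bq l) := (Δmap l).toAlgebra

/-- The `A`-submodule `x^m·B = {x^m·b : b ∈ B}` of `B`. -/
def xmB (l m : ℕ) : Submodule (Aq l) (Bq l) :=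
  LinearMap.range (LinearMap.mulLeft (Aq l) (xB l ^ m))

/-!
Injectivity of `Δ`: the `ℤ`-linear map `ℤ[x,t] → A`, `x^a t^b ↦ x^(a - b % l) y^(b % l)`, is
unchanged by multiplying with `t^l`, so it factors through `B`, and it sends
`Δ(x^a y^b) = x^(a+b) t^b` back to `x^a y^b` because `x^l = y^l` in `A`.

Image: `Δ(I) ⊆ x·B` gives `Δ(I^(l-1)) ⊆ x^(l-1)·B`. Conversely `B` is spanned over `A` by the
powers of `t`, and with `r = n % l ≤ l - 1` one has `x^(l-1) t^n = Δ(x^(l-1-r) y^r)`.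
-/

lemma pow_eq_pow_sub_mod_mul_pow_mod {M : Type*} [CommMonoid M] {x y : M} {l : ℕ}
    (h : x ^ l = y ^ l) (j : ℕ) : y ^ j = x ^ (j - j % l) * y ^ (j % l) := by
  have hj := Nat.div_add_mod j l
  rw [show j - j % l = l * (j / l) by omega, pow_mul, h, ← pow_mul, ← pow_add, hj]

lemma xA_pow_eq_yA_pow (l : ℕ) : xA l ^ l = yA l ^ l := by
  have h : (X 0 ^ l - X 1 ^ l : MvPolynomial (Fin 2) ℤ) ∈ IA l := Ideal.subset_span rfl
  rw [← sub_eq_zero]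
  simpa [xA, yA] using Ideal.Quotient.eq_zero_iff_mem.mpr h

def Δpoly : MvPolynomial (Fin 2) ℤ →ₐ[ℤ] MvPolynomial (Fin 2) ℤ := aeval ![X 0, X 1 * X 0]

lemma Δpoly_monomial (d : Fin 2 →₀ ℕ) :
    Δpoly (monomial d 1) = monomial (d + Finsupp.single 0 (d 1)) 1 := by
  rw [monomial_fin_two, monomial_fin_two]
  simp [Δpoly, mul_pow, pow_add, mul_comm, mul_assoc]

lemma Δmap_mk (l : ℕ) (p : MvPolynomial (Fin 2) ℤ) :
    Δmap l (Ideal.Quotient.mk (IA l) p) = Ideal.Quotient.mk (IB l) (Δpoly p) := by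
  rw [Δmap, Ideal.Quotient.lift_mk, ← Ideal.Quotient.mkₐ_eq_mk ℤ, Δpoly, comp_aeval_apply]
  congr 2
  ext i
  fin_cases i <;> simp [xB, tB]

def Δretract (l : ℕ) : MvPolynomial (Fin 2) ℤ →ₗ[ℤ] Aq l :=
  (basisMonomials (Fin 2) ℤ).constr ℤ fun d => xA l ^ (d 0 - d 1 % l) * yA l ^ (d 1 % l)

lemma Δretract_monomial (l : ℕ) (d : Fin 2 →₀ ℕ) :
    Δretract l (monomial d 1) = xA l ^ (d 0 - d 1 % l) * yA l ^ (d 1 % l) :=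
  (basisMonomials (Fin 2) ℤ).constr_basis ℤ _ d

lemma Δretract_X_one_pow_mul (l : ℕ) (q : MvPolynomial (Fin 2) ℤ) :
    Δretract l (X 1 ^ l * q) = Δretract l q := by
  have h : Δretract l ∘ₗ LinearMap.mulLeft ℤ (X 1 ^ l) = Δretract l := by
    refine (basisMonomials (Fin 2) ℤ).ext fun d => ?_
    simp only [coe_basisMonomials, LinearMap.coe_comp, Function.comp_apply,
      LinearMap.mulLeft_apply, X_pow_eq_monomial, monomial_mul, one_mul, Δretract_monomial]
    simp [Nat.add_mod_left]
  exact LinearMap.congr_fun h q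

lemma Δretract_Δpoly (l : ℕ) (p : MvPolynomial (Fin 2) ℤ) :
    Δretract l (Δpoly p) = Ideal.Quotient.mk (IA l) p := by
  have h : Δretract l ∘ₗ Δpoly.toLinearMap = (Ideal.Quotient.mkₐ ℤ (IA l)).toLinearMap := by
    refine (basisMonomials (Fin 2) ℤ).ext fun d => ?_
    simp only [coe_basisMonomials, LinearMap.coe_comp, Function.comp_apply,
      AlgHom.toLinearMap_apply, Δpoly_monomial, Δretract_monomial, Ideal.Quotient.mkₐ_eq_mk]
    rw [monomial_fin_two]
    simp only [Finsupp.coe_add, Pi.add_apply, Finsupp.single_eq_same, ne_eq, one_ne_zero,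
      not_false_eq_true, Finsupp.single_eq_of_ne, add_zero, map_one, one_mul, map_mul, map_pow]
    rw [Nat.add_sub_assoc (Nat.mod_le _ _), pow_add, mul_assoc,
      ← pow_eq_pow_sub_mod_mul_pow_mod (xA_pow_eq_yA_pow l)]
    rfl
  exact LinearMap.congr_fun h p

lemma Δmap_injective (l : ℕ) : Function.Injective (Δmap l) := by
  rw [injective_iff_map_eq_zero]
  intro a ha
  obtain ⟨p, rfl⟩ := Ideal.Quotient.mk_surjective a
  rw [Δmap_mk, Ideal.Quotient.eq_zero_iff_mem, IB, Ideal.mem_span_singleton'] at ha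
  obtain ⟨q, hq⟩ := ha
  rw [← Δretract_Δpoly, ← hq, mul_comm, sub_mul, one_mul, map_sub, Δretract_X_one_pow_mul,
    sub_self]

lemma algebraMap_eq_Δmap (l : ℕ) : algebraMap (Aq l) (Bq l) = Δmap l := rfl

lemma xA_mem_Iid (l : ℕ) : xA l ∈ Iid l := Ideal.subset_span (Set.mem_insert _ _)

lemma yA_mem_Iid (l : ℕ) : yA l ∈ Iid l := Ideal.subset_span (Set.mem_insert_of_mem _ rfl)

lemma mem_xmB_iff (l m : ℕ) (b : Bq l) : b ∈ xmB l m ↔ xB l ^ m ∣ b := by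
  simp [xmB, dvd_def, eq_comm]

lemma map_Iid_pow_le_xmB (l n : ℕ) :
    Submodule.map (Algebra.linearMap (Aq l) (Bq l)) (Iid l ^ n) ≤ xmB l n := by
  rintro _ ⟨a, ha, rfl⟩
  have hI : (Iid l).map (Δmap l) ≤ Ideal.span {xB l} := by
    rw [Iid, Ideal.map_span, Set.image_pair, Δmap_xA, Δmap_yA, Ideal.span_le,
      Set.insert_subset_iff, Set.singleton_subset_iff]
    exact ⟨Ideal.subset_span rfl, Ideal.mul_mem_left _ _ (Ideal.subset_span rfl)⟩
  have hmap : Δmap l a ∈ ((Iid l).map (Δmap l)) ^ n :=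
    Ideal.map_pow (Δmap l) (Iid l) n ▸ Ideal.mem_map_of_mem _ ha
  rw [mem_xmB_iff, ← Ideal.mem_span_singleton, ← Ideal.span_singleton_pow]
  exact Ideal.pow_right_mono hI n hmap

lemma xB_pow_mul_tB_pow_mem {l : ℕ} (hl : 1 ≤ l) (n : ℕ) :
    xB l ^ (l - 1) * tB l ^ n ∈
      Submodule.map (Algebra.linearMap (Aq l) (Bq l)) (Iid l ^ (l - 1)) := by
  obtain ⟨k, hk⟩ : ∃ k, k + n % l = l - 1 := ⟨l - 1 - n % l, by have := Nat.mod_lt n hl; omega⟩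
  refine ⟨xA l ^ k * yA l ^ (n % l), ?_, ?_⟩
  · rw [← hk, Ideal.IsTwoSided.pow_add]
    exact Ideal.mul_mem_mul (Ideal.pow_mem_pow (xA_mem_Iid l) k)
      (Ideal.pow_mem_pow (yA_mem_Iid l) (n % l))
  · rw [Algebra.linearMap_apply, algebraMap_eq_Δmap, map_mul, map_pow, map_pow, Δmap_xA,
      Δmap_yA, pow_eq_pow_mod n (tB_pow l), ← hk]
    ring

lemma adjoin_tB_eq_top (l : ℕ) : Algebra.adjoin (Aq l) {tB l} = ⊤ := by
  refine Algebra.eq_top_iff.mpr fun b => ?_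
  obtain ⟨p, rfl⟩ := Ideal.Quotient.mk_surjective b
  induction p using MvPolynomial.induction_on with
  | C c =>
    rw [show Ideal.Quotient.mk (IB l) (C c) = c from
      eq_intCast ((Ideal.Quotient.mk (IB l)).comp (C : ℤ →+* MvPolynomial (Fin 2) ℤ)) c]
    exact intCast_mem _ c
  | add p q hp hq => simpa only [map_add] using add_mem hp hq
  | mul_X p i hp =>
    rw [map_mul]
    refine mul_mem hp ?_
    fin_cases i
    · change xB l ∈ _
      rw [← Δmap_xA, ← algebraMap_eq_Δmap]
      exact Subalgebra.algebraMap_mem _ (xA l)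
    · exact Algebra.subset_adjoin rfl

lemma xmB_le_map_Iid_pow {l : ℕ} (hl : 1 ≤ l) :
    xmB l (l - 1) ≤ Submodule.map (Algebra.linearMap (Aq l) (Bq l)) (Iid l ^ (l - 1)) := by
  have htop : (⊤ : Submodule (Aq l) (Bq l)) = Submodule.span (Aq l) (Set.range (tB l ^ ·)) := by
    rw [← Submonoid.coe_powers, Submonoid.powers_eq_closure, ← Algebra.adjoin_eq_span,
      adjoin_tB_eq_top, Algebra.top_toSubmodule]
  rw [xmB, LinearMap.range_eq_map, htop, Submodule.map_span, Submodule.span_le]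
  rintro _ ⟨_, ⟨n, rfl⟩, rfl⟩
  exact xB_pow_mul_tB_pow_mem hl n

lemma map_Iid_pow_eq_xmB {l : ℕ} (hl : 1 ≤ l) :
    Submodule.map (Algebra.linearMap (Aq l) (Bq l)) (Iid l ^ (l - 1)) = xmB l (l - 1) :=
  le_antisymm (map_Iid_pow_le_xmB l (l - 1)) (xmB_le_map_Iid_pow hl)

theorem stmt_2 (l : ℕ) (hl : 1 ≤ l) :
    (Δmap l) '' ((Iid l ^ (l - 1) : Ideal (Aq l)) : Set (Aq l)) =
      {b : Bq l | ∃ c : Bq l, b = xB l ^ (l - 1) * c} ∧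
    Nonempty ((↥(Iid l ^ (l - 1))) ≃ₗ[Aq l] ↥(xmB l (l - 1))) := by
  have hmap := map_Iid_pow_eq_xmB hl
  refine ⟨?_, ⟨(Submodule.equivMapOfInjective _ (Δmap_injective l) _).trans
    (LinearEquiv.ofEq _ _ hmap)⟩⟩
  ext b
  exact (SetLike.ext_iff.mp hmap b).trans (mem_xmB_iff l _ b)
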